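/- arXiv:1902.00839 — 3 statements merged into one kernel-verified Lean document; each statement's English description precedes it below -/
import Mathlib

section
/- Lower bound for the commutator: let p ∈ (1,∞). Let 𝔄 be a complex-valued function such that 𝔄/b is real-valued and 𝔄/b ∈ L^1_loc(ℝ). If the commutator [𝔄/b, C_Γ] is bounded on L^p(ℝ), then 𝔄 ∈ BMO_b(ℝ) and ‖𝔄‖_{BMO_b(ℝ)} ≤ C ‖[𝔄/b, C_Γ]‖_{L^p(ℝ)→L^p(ℝ)}, with C independent of 𝔄. -/
open MeasureTheory Filter Set
open scoped ENNReal Topology NNReal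

noncomputable section

/-- The accretive function `b(x) = 1 + i A'(x)`. -/
def bFun (A' : ℝ → ℝ) : ℝ → ℂ := fun x => 1 + Complex.I * (A' x : ℂ)

/-- The kernel of the Cauchy integral `C_Γ` associated with the Lipschitz curve
`Γ = {x + iA(x) : x ∈ ℝ}`. -/
def cauchyKer (A A' : ℝ → ℝ) (x y : ℝ) : ℂ :=
  ((Real.pi : ℂ) * Complex.I)⁻¹ *
    ((1 + Complex.I * (A' y : ℂ)) /
      ((y : ℂ) - (x : ℂ) + Complex.I * ((A y : ℂ) - (A x : ℂ))))

/-- The kernel of the related Cauchy operator `C̃_Γ`. -/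
def relKer (A : ℝ → ℝ) (x y : ℝ) : ℂ :=
  ((Real.pi : ℂ) * Complex.I)⁻¹ *
    (1 / ((y : ℂ) - (x : ℂ) + Complex.I * ((A y : ℂ) - (A x : ℂ))))

/-- `IsPV K f x z` : `z` is the principal value `p.v. ∫ K(x,y) f(y) dy`. -/
def IsPV (K : ℝ → ℝ → ℂ) (f : ℝ → ℂ) (x : ℝ) (z : ℂ) : Prop :=
  Tendsto (fun ε : ℝ => ∫ y in {y : ℝ | ε < |y - x|}, K x y * f y)
    (𝓝[>] (0 : ℝ)) (𝓝 z)

/-- `T` is (the `L^p`-extension of) the principal value singular integral operator with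
kernel `K`: for every `f ∈ L^p(ℝ)`, `1 < p < ∞`, at a.e. `x` the value `T f x` is the
principal value of `∫ K(x,y) f(y) dy`. -/
def IsPVOp (K : ℝ → ℝ → ℂ) (T : (ℝ → ℂ) → ℝ → ℂ) : Prop :=
  ∀ p : ℝ≥0∞, 1 < p → p < ⊤ → ∀ f : ℝ → ℂ, MemLp f p volume →
    ∀ᵐ x ∂volume, IsPV K f x (T f x)

/-- `T` is bounded on `L^p(ℝ)` with constant `C`. -/
def BddOnLp (p : ℝ≥0∞) (T : (ℝ → ℂ) → ℝ → ℂ) (C : ℝ) : Prop :=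
  ∀ f : ℝ → ℂ, MemLp f p volume →
    MemLp (T f) p volume ∧
      eLpNorm (T f) p volume ≤ ENNReal.ofReal C * eLpNorm f p volume

/-- `T` is a compact operator on `L^p(ℝ)`: every `L^p`-bounded sequence has a subsequence
whose image under `T` is Cauchy in the `L^p` (semi)metric; equivalently, `T` maps bounded
sets to precompact (totally bounded) sets. -/
def CompactOnLp (p : ℝ≥0∞) (T : (ℝ → ℂ) → ℝ → ℂ) : Prop :=
  ∀ (f : ℕ → ℝ → ℂ) (C : ℝ≥0∞), (∀ n, MemLp (f n) p volume) →
    (∀ n, eLpNorm (f n) p volume ≤ C) →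
    ∃ φ : ℕ → ℕ, StrictMono φ ∧
      ∀ ε : ℝ≥0∞, 0 < ε → ∃ N : ℕ, ∀ m ≥ N, ∀ n ≥ N,
        eLpNorm (fun x => T (f (φ m)) x - T (f (φ n)) x) p volume < ε

/-- The bilinear `L²`-pairing `⟨u, v⟩ = ∫ u v`. -/
def pairing (u v : ℝ → ℂ) : ℂ := ∫ x, u x * v x

/-- `S` is the adjoint of `T` with respect to the bilinear pairing `⟨u,v⟩ = ∫ u v`. -/
def IsBilinAdjoint (T S : (ℝ → ℂ) → ℝ → ℂ) : Prop :=
  ∀ f g : ℝ → ℂ, MemLp f 2 volume → MemLp g 2 volume →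
    pairing (T f) g = pairing f (S g)

/-- The bilinear form `Π_b(g,h) = b⁻¹ (g • T h − h • T* g)`. -/
def PiB (b : ℝ → ℂ) (T Tstar : (ℝ → ℂ) → ℝ → ℂ) (g h : ℝ → ℂ) : ℝ → ℂ :=
  fun x => (b x)⁻¹ * (g x * T h x - h x * Tstar g x)

/-- The commutator `[a, T] f = a • T f − T (a f)`. -/
def commutatorFn (a : ℝ → ℂ) (T : (ℝ → ℂ) → ℝ → ℂ) (f : ℝ → ℂ) : ℝ → ℂ :=
  fun x => a x * T f x - T (fun y => a y * f y) x

/-- The mean oscillation of `f` over the interval `(a, c)`. -/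
def meanOsc (f : ℝ → ℂ) (a c : ℝ) : ℝ :=
  (c - a)⁻¹ * ∫ x in a..c, ‖f x - (c - a)⁻¹ • ∫ y in a..c, f y‖

/-- The set of all mean oscillations of `f` over bounded intervals. -/
def bmoSet (f : ℝ → ℂ) : Set ℝ := {t | ∃ a c : ℝ, a < c ∧ t = meanOsc f a c}

/-- `f ∈ BMO(ℝ)`. -/
def MemBMO (f : ℝ → ℂ) : Prop :=
  LocallyIntegrable f volume ∧ BddAbove (bmoSet f)

/-- The `BMO` seminorm of `f`. -/
def bmoNorm (f : ℝ → ℂ) : ℝ := sSup (bmoSet f)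

/-- `f ∈ VMO(ℝ)`: `f ∈ BMO(ℝ)` and the mean oscillations vanish uniformly over small
intervals, over large intervals, and over intervals far from the origin. -/
def MemVMO (f : ℝ → ℂ) : Prop :=
  MemBMO f ∧
    (∀ ε : ℝ, 0 < ε → ∃ δ : ℝ, 0 < δ ∧
      ∀ a c : ℝ, a < c → c - a < δ → meanOsc f a c < ε) ∧
    (∀ ε : ℝ, 0 < ε → ∃ R : ℝ, 0 < R ∧
      ∀ a c : ℝ, a < c → R < c - a → meanOsc f a c < ε) ∧
    (∀ ε : ℝ, 0 < ε → ∃ R : ℝ, 0 < R ∧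
      ∀ a c : ℝ, a < c → (c ≤ -R ∨ R ≤ a) → meanOsc f a c < ε)

/-- `𝔄 ∈ BMO_b(ℝ)` iff `𝔄 / b ∈ BMO(ℝ)`. -/
def MemBMOb (b f : ℝ → ℂ) : Prop := MemBMO (fun x => f x / b x)

/-- `‖𝔄‖_{BMO_b} := ‖𝔄 / b‖_{BMO}`. -/
def bmobNorm (b f : ℝ → ℂ) : ℝ := bmoNorm (fun x => f x / b x)

/-- `𝔄 ∈ VMO_b(ℝ)` iff `𝔄 / b ∈ VMO(ℝ)`. -/
def MemVMOb (b f : ℝ → ℂ) : Prop := MemVMO (fun x => f x / b x)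

/-- An `H¹_b(ℝ)` `L^∞`-atom: supported in an interval `I = I(x0, r)`, with
`‖a‖_∞ ≤ 1/|I|` and the cancellation `∫ a b = 0`. Taking `b ≡ 1` gives classical
`H¹(ℝ)` `L^∞`-atoms. -/
def IsAtomB (b a : ℝ → ℂ) : Prop :=
  ∃ x0 r : ℝ, 0 < r ∧ (∀ x, x ∉ Metric.ball x0 r → a x = 0) ∧
    (∀ x, ‖a x‖ ≤ (2 * r)⁻¹) ∧
    Integrable (fun x => a x * b x) volume ∧ (∫ x, a x * b x) = 0

/-- The `ℓ¹`-sums of coefficients of atomic decompositions of `f` into `H¹_b` atoms. -/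
def h1bReps (b f : ℝ → ℂ) : Set ℝ :=
  {t | ∃ (lam : ℕ → ℂ) (a : ℕ → ℝ → ℂ),
        (∀ j, IsAtomB b (a j)) ∧ Summable (fun j => ‖lam j‖) ∧
        (∀ᵐ x ∂volume, HasSum (fun j => lam j * a j x) (f x)) ∧
        t = ∑' j, ‖lam j‖}

/-- `f ∈ H¹_b(ℝ)`: `f` is integrable and admits an atomic decomposition. -/
def MemH1b (b f : ℝ → ℂ) : Prop := Integrable f volume ∧ (h1bReps b f).Nonempty

/-- The atomic `H¹_b(ℝ)` norm (with value `⊤` when `f ∉ H¹_b(ℝ)`). -/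
def h1bNorm (b f : ℝ → ℂ) : ℝ≥0∞ := ⨅ t ∈ h1bReps b f, ENNReal.ofReal t

end

/-!
Write `φ = 𝔄 / b`, a real function, and `z(t) = t + i A(t)`, so that `chord A x y = z(y) - z(x)`.
Fix `I = (a, c]` of length `r`, put `J = (c + r, c + 2r]`, and let `m` be a median of `φ` on
`J`. Test the commutator against `f = 𝟙_E / b`, where `E ⊆ J ∩ {φ ≤ m}` has measure `≥ r/4` and
`φ` is bounded on `E` (so that `φ f ∈ L^p`). For `x ∈ I` the kernel is not singular on `E` and
`K(x, y) f(y) = 𝟙_E(y) (π i)⁻¹ / (z(y) - z(x))`, hence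
`[φ, C_Γ] f (x) = (π i)⁻¹ ∫_E (φ x - φ y) / (z(y) - z(x)) dy`.
As `Re (1 / (z(y) - z(x))) ≥ 1 / (3 (1 + L²) r)` and `φ x - φ y ≥ φ x - m`, this gives
`(φ x - m)⁺ ≤ 12 (1 + L²) π |[φ, C_Γ] f (x)|` on `I`; integrating and using Hölder with
`‖f‖_p ≤ r^{1/p}` gives `∫_I (φ - m)⁺ ≤ 12 (1 + L²) π N r`. The same argument on `{φ ≥ m}` bounds
`(φ - m)⁻`, and `∫_I |φ - m| ≤ 24 (1 + L²) π N r` bounds the mean oscillation of `φ` on `I`.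
-/

namespace MeasureTheory.Measure

theorem exists_median (ν : Measure ℝ) [IsFiniteMeasure ν] :
    ∃ m, ν univ / 2 ≤ ν (Iic m) ∧ ν univ / 2 ≤ ν (Ici m) := by
  rcases eq_zero_or_pos (ν univ) with h0 | hpos
  · exact ⟨0, by simp [h0]⟩
  have hhalf : ν univ / 2 < ν univ := ENNReal.half_lt_self hpos.ne' (measure_ne_top ν univ)
  set S := {t : ℝ | ν univ / 2 ≤ ν (Iic t)}
  have hS : S.Nonempty := ((tendsto_measure_Iic_atTop ν).eventually_const_le hhalf).exists
  have hSbdd : BddBelow S := by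
    have hbot : Tendsto (fun t => ν (Iic t)) atBot (𝓝 0) := by
      have hempty : (⋂ t : ℝ, Iic t) = ∅ :=
        iInter_Iic_eq_empty_iff.2 (by simp)
      simpa [Function.comp_def, hempty] using tendsto_measure_iInter_atBot (μ := ν)
        (fun t => measurableSet_Iic.nullMeasurableSet) (fun _ _ => Iic_subset_Iic.2)
        ⟨0, measure_ne_top ν _⟩
    obtain ⟨t₀, ht₀⟩ := eventually_atBot.1 (hbot.eventually_lt_const (ENNReal.half_pos hpos.ne'))
    exact ⟨t₀, fun t ht => le_of_not_ge fun htt₀ => (ht₀ t htt₀).not_ge ht⟩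
  refine ⟨sInf S, ?_, ?_⟩
  · have hlim := tendsto_measure_biInter_gt (μ := ν) (s := Iic) (a := sInf S)
      (fun _ _ => measurableSet_Iic.nullMeasurableSet) (fun _ _ _ => Iic_subset_Iic.2)
      ⟨sInf S + 1, by linarith, measure_ne_top ν _⟩
    have hIic : (⋂ r > sInf S, Iic r) = Iic (sInf S) := by
      ext x
      simpa using ⟨le_of_forall_gt_imp_ge_of_dense, fun h r hr => h.trans hr.le⟩
    rw [hIic] at hlim
    refine ge_of_tendsto hlim (eventually_nhdsWithin_of_forall fun r hr => ?_)
    obtain ⟨t, htS, htr⟩ := (csInf_lt_iff hSbdd hS).1 hr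
    exact htS.trans (measure_mono (Iic_subset_Iic.2 htr.le))
  · have hIio : ν (Iio (sInf S)) ≤ ν univ / 2 := by
      have hlt : ∀ k : ℕ, sInf S - 1 / (k + 1) < sInf S := fun k => by
        linarith [Nat.one_div_pos_of_nat (α := ℝ) (n := k)]
      have hlim : Tendsto (fun k : ℕ => sInf S - 1 / (k + 1)) atTop (𝓝 (sInf S)) := by
        simpa using (tendsto_const_nhds (x := sInf S)).sub tendsto_one_div_add_atTop_nhds_zero_nat
      have hmono : Monotone fun k : ℕ => Iic (sInf S - 1 / (k + 1)) := fun k l hkl =>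
        Iic_subset_Iic.2 (by gcongr)
      have := tendsto_measure_iUnion_atTop (μ := ν) hmono
      rw [iUnion_Iic_eq_Iio_of_lt_of_tendsto hlt hlim] at this
      refine le_of_tendsto' this fun k => ?_
      have hk : sInf S - 1 / (k + 1) ∉ S := notMem_of_lt_csInf (hlt k) hSbdd
      exact (not_le.1 hk).le
    rw [← compl_Iio, measure_compl measurableSet_Iio (measure_ne_top ν _)]
    calc ν univ / 2 = ν univ - ν univ / 2 := (ENNReal.sub_half (measure_ne_top ν _)).symm
      _ ≤ ν univ - ν (Iio (sInf S)) := tsub_le_tsub_left hIio _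

end MeasureTheory.Measure

theorem MeasureTheory.exists_nat_lt_measure_inter_norm_le {α E : Type*} [MeasurableSpace α]
    [Norm E] (μ : Measure α) (g : α → E) {T : Set α} {c : ℝ≥0∞} (hc : c < μ T) :
    ∃ n : ℕ, c < μ (T ∩ {x | ‖g x‖ ≤ n}) := by
  have hmono : Monotone fun n : ℕ => T ∩ {x | ‖g x‖ ≤ n} := fun n k hnk =>
    inter_subset_inter_right T fun x (hx : ‖g x‖ ≤ n) => hx.trans (Nat.cast_le.2 hnk)
  have hT : (⋃ n : ℕ, T ∩ {x | ‖g x‖ ≤ n}) = T := by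
    rw [← inter_iUnion, inter_eq_left]
    exact fun x _ => mem_iUnion.2 (exists_nat_ge ‖g x‖)
  have := tendsto_measure_iUnion_atTop (μ := μ) hmono
  rw [hT] at this
  exact (this.eventually_const_lt hc).exists

theorem MeasureTheory.setIntegral_norm_le_eLpNorm_mul_rpow {α E : Type*} [MeasurableSpace α]
    [NormedAddCommGroup E] {μ : Measure α} {g : α → E} {p : ℝ≥0∞} {s : Set α} (hp : 1 ≤ p)
    (hg : MemLp g p μ) (hs : μ s ≠ ∞) :
    ∫ x in s, ‖g x‖ ∂μ ≤ (eLpNorm g p μ).toReal * μ.real s ^ (1 - p.toReal⁻¹) := by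
  have hholder : eLpNorm g 1 (μ.restrict s) ≤ eLpNorm g p μ * μ s ^ (1 - p.toReal⁻¹) := by
    have := eLpNorm_le_eLpNorm_mul_rpow_measure_univ (μ := μ.restrict s) hp
      hg.aestronglyMeasurable.restrict
    rw [Measure.restrict_apply_univ, ENNReal.toReal_one, div_one, one_div] at this
    exact this.trans (mul_le_mul_left (eLpNorm_mono_measure g Measure.restrict_le_self) _)
  have hexp : 0 ≤ 1 - p.toReal⁻¹ := by
    rcases eq_or_ne p ∞ with rfl | hpt
    · simp
    · have h1 : 1 ≤ p.toReal := by simpa using ENNReal.toReal_mono hpt hp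
      linarith [inv_le_one_of_one_le₀ h1]
  have hfin : eLpNorm g p μ * μ s ^ (1 - p.toReal⁻¹) ≠ ∞ :=
    ENNReal.mul_ne_top hg.eLpNorm_ne_top (ENNReal.rpow_ne_top_of_nonneg hexp hs)
  rw [integral_norm_eq_lintegral_enorm hg.aestronglyMeasurable.restrict,
    ← eLpNorm_one_eq_lintegral_enorm]
  calc (eLpNorm g 1 (μ.restrict s)).toReal
      ≤ (eLpNorm g p μ * μ s ^ (1 - p.toReal⁻¹)).toReal := ENNReal.toReal_mono hfin hholder
    _ = _ := by rw [ENNReal.toReal_mul, ← ENNReal.toReal_rpow, measureReal_def]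

theorem MeasureTheory.eLpNorm_indicator_le_of_ae_norm_le {α F : Type*} [MeasurableSpace α]
    [NormedAddCommGroup F] {μ : Measure α} {p : ℝ≥0∞} {s : Set α} {w : α → F} {C : ℝ}
    (hs : MeasurableSet s) (hw : ∀ᵐ y ∂μ.restrict s, ‖w y‖ ≤ C) :
    eLpNorm (s.indicator w) p μ ≤ μ s ^ p.toReal⁻¹ * ENNReal.ofReal C := by
  rw [eLpNorm_indicator_eq_eLpNorm_restrict hs, ← Measure.restrict_apply_univ s]
  exact eLpNorm_le_of_ae_bound hw

theorem MeasureTheory.memLp_indicator_of_ae_norm_le {α F : Type*} [MeasurableSpace α]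
    [NormedAddCommGroup F] {μ : Measure α} {p : ℝ≥0∞} {s : Set α} {w : α → F} {C : ℝ}
    (hs : MeasurableSet s) (hμs : μ s ≠ ∞) (hwm : AEStronglyMeasurable w μ)
    (hw : ∀ᵐ y ∂μ.restrict s, ‖w y‖ ≤ C) : MemLp (s.indicator w) p μ :=
  ⟨hwm.indicator hs, (eLpNorm_indicator_le_of_ae_norm_le hs hw).trans_lt
    (ENNReal.mul_lt_top (ENNReal.rpow_lt_top_of_nonneg (by positivity) hμs) ENNReal.ofReal_lt_top)⟩

theorem MeasureTheory.mul_measureReal_le_norm_setIntegral {α : Type*} [MeasurableSpace α]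
    {μ : Measure α} {s : Set α} {F : α → ℂ} {σ t : ℝ} (hs : μ s ≠ ∞) (hF : IntegrableOn F s μ)
    (hσ : |σ| ≤ 1) (h : ∀ᵐ y ∂μ.restrict s, t ≤ σ * (F y).re) :
    t * μ.real s ≤ ‖∫ y in s, F y ∂μ‖ := by
  calc t * μ.real s = ∫ _ in s, t ∂μ := by rw [setIntegral_const, smul_eq_mul, mul_comm]
    _ ≤ ∫ y in s, σ * (F y).re ∂μ := integral_mono_ae (integrableOn_const hs) (hF.re.const_mul σ) h
    _ = σ * (∫ y in s, F y ∂μ).re := by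
        rw [integral_const_mul, show ∫ y in s, (F y).re ∂μ = (∫ y in s, F y ∂μ).re from
          integral_re hF]
    _ ≤ |σ| * |(∫ y in s, F y ∂μ).re| := by rw [← abs_mul]; exact le_abs_self _
    _ ≤ ‖∫ y in s, F y ∂μ‖ :=
        (mul_le_of_le_one_left (abs_nonneg _) hσ).trans (Complex.abs_re_le_norm _)

theorem IsPV.eq_integral_of_eq_zero_near {K : ℝ → ℝ → ℂ} {f : ℝ → ℂ} {x r : ℝ} {z : ℂ}
    (hr : 0 < r) (h : IsPV K f x z) (hf : ∀ y, |y - x| ≤ r → f y = 0) :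
    z = ∫ y, K x y * f y := by
  refine tendsto_nhds_unique h (tendsto_const_nhds.congr' ?_)
  filter_upwards [Ioo_mem_nhdsGT hr] with ε hε
  refine (setIntegral_eq_integral_of_forall_compl_eq_zero fun y hy => ?_).symm
  rw [hf y ((not_lt.1 hy).trans hε.2.le), mul_zero]

theorem meanOsc_le_two_mul {f : ℝ → ℂ} {a c : ℝ} (hac : a < c)
    (hf : IntervalIntegrable f volume a c) (z : ℂ) :
    meanOsc f a c ≤ 2 * ((c - a)⁻¹ * ∫ x in a..c, ‖f x - z‖) := by
  set M := (c - a)⁻¹ • ∫ y in a..c, f y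
  have hr : 0 < c - a := sub_pos.2 hac
  have hnorm : IntervalIntegrable (fun x => ‖f x - z‖) volume a c :=
    (hf.sub intervalIntegrable_const).norm
  have hzM : ‖z - M‖ ≤ (c - a)⁻¹ * ∫ x in a..c, ‖f x - z‖ := by
    have : z - M = (c - a)⁻¹ • ∫ y in a..c, (z - f y) := by
      rw [intervalIntegral.integral_sub intervalIntegrable_const hf,
        intervalIntegral.integral_const, smul_sub, smul_smul, inv_mul_cancel₀ hr.ne', one_smul]
    rw [this, norm_smul, Real.norm_of_nonneg (inv_nonneg.2 hr.le)]
    gcongr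
    refine (intervalIntegral.norm_integral_le_integral_norm hac.le).trans (le_of_eq ?_)
    simp_rw [norm_sub_rev]
  have hosc : ∫ x in a..c, ‖f x - M‖ ≤ 2 * ∫ x in a..c, ‖f x - z‖ := by
    calc ∫ x in a..c, ‖f x - M‖ ≤ ∫ x in a..c, (‖f x - z‖ + ‖z - M‖) :=
          intervalIntegral.integral_mono_on hac.le (hf.sub intervalIntegrable_const).norm
            (hnorm.add intervalIntegrable_const) fun x _ => norm_sub_le_norm_sub_add_norm_sub _ _ _
      _ = (∫ x in a..c, ‖f x - z‖) + (c - a) * ‖z - M‖ := by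
          rw [intervalIntegral.integral_add hnorm intervalIntegrable_const,
            intervalIntegral.integral_const, smul_eq_mul]
      _ ≤ 2 * ∫ x in a..c, ‖f x - z‖ := by
          have := mul_le_mul_of_nonneg_left hzM hr.le
          rw [← mul_assoc, mul_inv_cancel₀ hr.ne', one_mul] at this
          linarith
  unfold meanOsc
  calc (c - a)⁻¹ * ∫ x in a..c, ‖f x - M‖ ≤ (c - a)⁻¹ * (2 * ∫ x in a..c, ‖f x - z‖) := by
        gcongr
    _ = _ := by ring

theorem memBMO_and_bmoNorm_le_of_meanOsc_le {f : ℝ → ℂ} {K : ℝ} (hf : LocallyIntegrable f volume)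
    (hK : ∀ a c, a < c → meanOsc f a c ≤ K) : MemBMO f ∧ bmoNorm f ≤ K := by
  have hbound : K ∈ upperBounds (bmoSet f) := by
    rintro t ⟨a, c, hac, rfl⟩
    exact hK a c hac
  exact ⟨⟨hf, K, hbound⟩, csSup_le ⟨_, 0, 1, zero_lt_one, rfl⟩ hbound⟩

section CauchyKernel

variable (A A' : ℝ → ℝ)

theorem bFun_re (x : ℝ) : (bFun A' x).re = 1 := by
  simp [bFun]

theorem one_le_norm_bFun (x : ℝ) : 1 ≤ ‖bFun A' x‖ := by
  simpa [bFun_re] using Complex.abs_re_le_norm (bFun A' x)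

theorem bFun_ne_zero (x : ℝ) : bFun A' x ≠ 0 :=
  norm_pos_iff.1 (one_pos.trans_le (one_le_norm_bFun A' x))

theorem measurable_bFun (hmeas : Measurable A') : Measurable (bFun A') := by
  unfold bFun
  fun_prop

theorem norm_inv_bFun_le_one (y : ℝ) : ‖(bFun A')⁻¹ y‖ ≤ 1 := by
  simpa using inv_le_one_of_one_le₀ (one_le_norm_bFun A' y)

theorem eLpNorm_indicator_inv_bFun_le {μ : Measure ℝ} {p : ℝ≥0∞} {E : Set ℝ}
    (hE : MeasurableSet E) : eLpNorm (E.indicator (bFun A')⁻¹) p μ ≤ μ E ^ p.toReal⁻¹ := by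
  simpa using eLpNorm_indicator_le_of_ae_norm_le (p := p) hE
    (ae_of_all _ (norm_inv_bFun_le_one A'))

def chord (x y : ℝ) : ℂ := (y : ℂ) - (x : ℂ) + Complex.I * ((A y : ℂ) - (A x : ℂ))

theorem chord_re (x y : ℝ) : (chord A x y).re = y - x := by
  simp [chord]

theorem chord_im (x y : ℝ) : (chord A x y).im = A y - A x := by
  simp [chord]

theorem relKer_eq_mul_chord_inv (x y : ℝ) :
    relKer A x y = ((Real.pi : ℂ) * Complex.I)⁻¹ * (chord A x y)⁻¹ := by
  rw [relKer, chord, one_div]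

theorem cauchyKer_mul_inv_bFun (x y : ℝ) :
    cauchyKer A A' x y * (bFun A' y)⁻¹ = relKer A x y := by
  have hb := bFun_ne_zero A' y
  simp only [cauchyKer, relKer, bFun] at hb ⊢
  field_simp

theorem norm_relKer_le {x y r : ℝ} (hr : 0 < r) (hxy : r ≤ |y - x|) :
    ‖relKer A x y‖ ≤ (Real.pi * r)⁻¹ := by
  have hchord : r ≤ ‖chord A x y‖ :=
    hxy.trans (by simpa [chord_re] using Complex.abs_re_le_norm (chord A x y))
  rw [relKer_eq_mul_chord_inv, norm_mul, norm_inv, norm_inv, norm_mul, Complex.norm_I, mul_one,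
    Complex.norm_real, Real.norm_of_nonneg Real.pi_pos.le, mul_inv]
  gcongr

variable {A}

theorem measurable_relKer (hA : Continuous A) (x : ℝ) : Measurable (relKer A x) := by
  unfold relKer
  have := hA.measurable
  fun_prop

theorem inv_le_re_chord_inv {L : ℝ≥0} (hA : LipschitzWith L A) {x y : ℝ} (hxy : x < y) :
    ((1 + (L : ℝ) ^ 2) * (y - x))⁻¹ ≤ ((chord A x y)⁻¹).re := by
  have hyx : 0 < y - x := sub_pos.2 hxy
  have hLip : |A y - A x| ≤ L * (y - x) := by
    simpa [Real.dist_eq, abs_of_pos hyx] using hA.dist_le_mul y x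
  have hnormSq : Complex.normSq (chord A x y) ≤ (1 + (L : ℝ) ^ 2) * (y - x) ^ 2 := by
    rw [Complex.normSq_apply, chord_re, chord_im]
    nlinarith [sq_abs (A y - A x), abs_nonneg (A y - A x)]
  have hpos : 0 < Complex.normSq (chord A x y) := by
    rw [Complex.normSq_pos, ← Complex.re_add_im (chord A x y), chord_re]
    intro h
    simpa [hyx.ne'] using congrArg Complex.re h
  rw [Complex.inv_re, chord_re, inv_eq_one_div, div_le_div_iff₀ (by positivity) hpos]
  nlinarith

end CauchyKernel

theorem commutatorFn_indicator_inv_bFun_eq {A A' : ℝ → ℝ} {CΓ : (ℝ → ℂ) → ℝ → ℂ} {a : ℝ → ℂ}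
    {E : Set ℝ} (hE : MeasurableSet E) {x r : ℝ} (hr : 0 < r) (hEx : ∀ y ∈ E, r < |y - x|)
    (hpv : IsPV (cauchyKer A A') (E.indicator (bFun A')⁻¹) x (CΓ (E.indicator (bFun A')⁻¹) x))
    (hpv' : IsPV (cauchyKer A A') (fun y => a y * E.indicator (bFun A')⁻¹ y) x
      (CΓ (fun y => a y * E.indicator (bFun A')⁻¹ y) x))
    (hK : IntegrableOn (relKer A x) E) (haK : IntegrableOn (fun y => a y * relKer A x y) E) :
    commutatorFn a CΓ (E.indicator (bFun A')⁻¹) x = ∫ y in E, (a x - a y) * relKer A x y := by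
  have hvan : ∀ y, |y - x| ≤ r → E.indicator (bFun A')⁻¹ y = 0 := fun y hy =>
    indicator_of_notMem (fun hyE => (hEx y hyE).not_ge hy) _
  have hCf : CΓ (E.indicator (bFun A')⁻¹) x = ∫ y in E, relKer A x y := by
    rw [hpv.eq_integral_of_eq_zero_near hr hvan, ← integral_indicator hE]
    congr 1 with y
    by_cases hy : y ∈ E <;> simp [hy, cauchyKer_mul_inv_bFun]
  have hCaf : CΓ (fun y => a y * E.indicator (bFun A')⁻¹ y) x = ∫ y in E, a y * relKer A x y := by
    rw [hpv'.eq_integral_of_eq_zero_near hr fun y hy => by rw [hvan y hy, mul_zero],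
      ← integral_indicator hE]
    congr 1 with y
    by_cases hy : y ∈ E <;> simp [hy, cauchyKer_mul_inv_bFun, mul_left_comm]
  rw [commutatorFn, hCf, hCaf, ← integral_const_mul, ← integral_sub (hK.const_mul _) haK]
  simp_rw [sub_mul]

theorem max_le_norm_integral_relKer {A : ℝ → ℝ} {L : ℝ≥0} (hA : LipschitzWith L A) {ψ : ℝ → ℝ}
    {E : Set ℝ} (hE : MeasurableSet E) (hEfin : volume E ≠ ∞) {x r : ℝ} (hr : 0 < r)
    (hEx : ∀ y ∈ E, r < y - x ∧ y - x ≤ 3 * r) (hvol : r / 4 ≤ volume.real E)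
    (hint : IntegrableOn (fun y => ((ψ x : ℂ) - ψ y) * relKer A x y) E) {σ m : ℝ} (hσ : |σ| ≤ 1)
    (hsign : ∀ᵐ y ∂volume.restrict E, σ * (ψ y - m) ≤ 0) :
    max (σ * (ψ x - m)) 0 ≤
      12 * (1 + (L : ℝ) ^ 2) * Real.pi * ‖∫ y in E, ((ψ x : ℂ) - ψ y) * relKer A x y‖ := by
  set t := σ * (ψ x - m)
  rcases le_or_gt t 0 with ht | ht
  · rw [max_eq_right ht]
    positivity
  rw [max_eq_left ht.le]
  set κ := ((1 + (L : ℝ) ^ 2) * (3 * r))⁻¹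
  have hκ : 0 < κ := inv_pos.2 (by positivity)
  set F := fun y => ((ψ x : ℂ) - ψ y) * (chord A x y)⁻¹
  have hFint : IntegrableOn F E := by
    refine IntegrableOn.congr_fun (hint.const_mul ((Real.pi : ℂ) * Complex.I)) (fun y _ => ?_) hE
    simp only [F, relKer_eq_mul_chord_inv]
    field_simp [Real.pi_ne_zero]
  have hre : ∀ y, σ * (F y).re = σ * (ψ x - ψ y) * ((chord A x y)⁻¹).re := fun y => by
    simp only [F, ← Complex.ofReal_sub, Complex.re_ofReal_mul]; ring
  have hlow : ∀ᵐ y ∂volume.restrict E, t * κ ≤ σ * (F y).re := by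
    filter_upwards [hsign, ae_restrict_mem hE] with y hy hyE
    obtain ⟨hry, hy3⟩ := hEx y hyE
    have hκle : κ ≤ ((chord A x y)⁻¹).re :=
      (inv_anti₀ (mul_pos (by positivity) (by linarith)) (by gcongr)).trans
        (inv_le_re_chord_inv hA (by linarith))
    rw [hre]
    exact mul_le_mul (by linarith) hκle hκ.le (by linarith)
  calc t = t * κ * (r / 4) * (12 * (1 + (L : ℝ) ^ 2)) := by
        simp only [κ]
        field_simp
        ring
    _ ≤ t * κ * volume.real E * (12 * (1 + (L : ℝ) ^ 2)) := by gcongr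
    _ ≤ ‖∫ y in E, F y‖ * (12 * (1 + (L : ℝ) ^ 2)) := by
        gcongr
        exact mul_measureReal_le_norm_setIntegral hEfin hFint hσ hlow
    _ = _ := by
        simp only [F, relKer_eq_mul_chord_inv, mul_left_comm _ ((Real.pi : ℂ) * Complex.I)⁻¹,
          integral_const_mul, norm_mul, norm_inv, Complex.norm_I, Complex.norm_real,
          Real.norm_of_nonneg Real.pi_pos.le]
        field_simp [Real.pi_ne_zero]

theorem max_le_norm_commutatorFn_indicator_inv_bFun {A A' : ℝ → ℝ} {L : ℝ≥0}
    (hA : LipschitzWith L A) {CΓ : (ℝ → ℂ) → ℝ → ℂ} {ψ : ℝ → ℝ}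
    (hψ : AEStronglyMeasurable ψ volume) {a c σ m n x : ℝ} (hx : x ∈ Ioc a c) (hσ : |σ| ≤ 1)
    {E : Set ℝ} (hE : MeasurableSet E) (hEfin : volume E ≠ ∞)
    (hEJ : E ⊆ Ioc (c + (c - a)) (c + 2 * (c - a))) (hvol : (c - a) / 4 ≤ volume.real E)
    (hEbd : ∀ᵐ y ∂volume.restrict E, |ψ y| ≤ n)
    (hsign : ∀ᵐ y ∂volume.restrict E, σ * (ψ y - m) ≤ 0)
    (hpv : IsPV (cauchyKer A A') (E.indicator (bFun A')⁻¹) x (CΓ (E.indicator (bFun A')⁻¹) x))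
    (hpv' : IsPV (cauchyKer A A') (fun y => (ψ y : ℂ) * E.indicator (bFun A')⁻¹ y) x
      (CΓ (fun y => (ψ y : ℂ) * E.indicator (bFun A')⁻¹ y) x)) :
    max (σ * (ψ x - m)) 0 ≤ 12 * (1 + (L : ℝ) ^ 2) * Real.pi *
      ‖commutatorFn (fun x => (ψ x : ℂ)) CΓ (E.indicator (bFun A')⁻¹) x‖ := by
  have hr : 0 < c - a := by linarith [hx.1, hx.2]
  have hEx : ∀ y ∈ E, c - a < y - x ∧ y - x ≤ 3 * (c - a) := fun y hy => by
    obtain ⟨h₁, h₂⟩ := hEJ hy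
    constructor <;> linarith [hx.1, hx.2]
  have hK : IntegrableOn (relKer A x) E :=
    Measure.integrableOn_of_bounded hEfin (measurable_relKer hA.continuous x).aestronglyMeasurable
      ((ae_restrict_iff' hE).2 (ae_of_all _ fun y hy =>
        norm_relKer_le A hr ((hEx y hy).1.le.trans (le_abs_self _))))
  have hψK : IntegrableOn (fun y => (ψ y : ℂ) * relKer A x y) E := by
    refine hK.bdd_mul (c := n)
      (Complex.continuous_ofReal.comp_aestronglyMeasurable hψ).restrict ?_
    filter_upwards [hEbd] with y hy
    simpa using hy
  rw [commutatorFn_indicator_inv_bFun_eq hE hr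
    (fun y hy => (hEx y hy).1.trans_le (le_abs_self _)) hpv hpv' hK hψK]
  exact max_le_norm_integral_relKer hA hE hEfin hr hEx hvol
    (by simpa only [IntegrableOn, sub_mul, Pi.sub_def] using (hK.const_mul (ψ x : ℂ)).sub hψK)
    hσ hsign

theorem setIntegral_max_le_of_commutator_bound {A A' : ℝ → ℝ} {L : ℝ≥0} (hA : LipschitzWith L A)
    (hA'meas : Measurable A') {CΓ : (ℝ → ℂ) → ℝ → ℂ} (hCΓ : IsPVOp (cauchyKer A A') CΓ)
    {p : ℝ≥0∞} (hp1 : 1 < p) (hp2 : p < ⊤) {ψ : ℝ → ℝ} (hψ : LocallyIntegrable ψ volume)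
    {N : ℝ} (hN : 0 ≤ N) (hbdd : BddOnLp p (commutatorFn (fun x => (ψ x : ℂ)) CΓ) N)
    {a c σ m n : ℝ} (hac : a < c) (hσ : |σ| ≤ 1) {E : Set ℝ} (hE : MeasurableSet E)
    (hEJ : E ⊆ Ioc (c + (c - a)) (c + 2 * (c - a))) (hvol : (c - a) / 4 ≤ volume.real E)
    (hEbd : ∀ᵐ y ∂volume.restrict E, |ψ y| ≤ n)
    (hsign : ∀ᵐ y ∂volume.restrict E, σ * (ψ y - m) ≤ 0) :
    ∫ x in Ioc a c, max (σ * (ψ x - m)) 0 ≤ 12 * (1 + (L : ℝ) ^ 2) * Real.pi * (N * (c - a)) := by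
  set r := c - a
  have hr : 0 < r := sub_pos.2 hac
  have hEr : volume E ≤ ENNReal.ofReal r :=
    (measure_mono hEJ).trans (le_of_eq (by rw [Real.volume_Ioc]; ring_nf))
  have hEfin : volume E ≠ ∞ := ne_top_of_le_ne_top ENNReal.ofReal_ne_top hEr
  set f := E.indicator (bFun A')⁻¹
  have hbm : AEStronglyMeasurable (bFun A')⁻¹ volume :=
    (measurable_bFun A' hA'meas).inv.aestronglyMeasurable
  have hf : MemLp f p volume :=
    memLp_indicator_of_ae_norm_le hE hEfin hbm (ae_of_all _ (norm_inv_bFun_le_one A'))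
  have hψf : MemLp (fun y => (ψ y : ℂ) * f y) p volume := by
    rw [show (fun y => (ψ y : ℂ) * f y) = E.indicator fun y => (ψ y : ℂ) * (bFun A')⁻¹ y from
      funext fun y => by by_cases hy : y ∈ E <;> simp [f, hy]]
    refine memLp_indicator_of_ae_norm_le (C := n) hE hEfin
      ((Complex.continuous_ofReal.comp_aestronglyMeasurable hψ.aestronglyMeasurable).mul hbm) ?_
    filter_upwards [hEbd] with y hy
    rw [norm_mul, Complex.norm_real, Real.norm_eq_abs]
    nlinarith [norm_nonneg ((bFun A')⁻¹ y), norm_inv_bFun_le_one A' y, abs_nonneg (ψ y)]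
  set g := commutatorFn (fun x => (ψ x : ℂ)) CΓ f
  obtain ⟨hg, hgnorm⟩ := hbdd f hf
  have hpt : ∀ᵐ x ∂volume.restrict (Ioc a c), max (σ * (ψ x - m)) 0 ≤
      12 * (1 + (L : ℝ) ^ 2) * Real.pi * ‖g x‖ := by
    filter_upwards [ae_restrict_of_ae (hCΓ p hp1 hp2 f hf),
      ae_restrict_of_ae (hCΓ p hp1 hp2 _ hψf), ae_restrict_mem measurableSet_Ioc] with x hpv hpv' hx
    exact max_le_norm_commutatorFn_indicator_inv_bFun hA hψ.aestronglyMeasurable hx hσ hE hEfin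
      hEJ hvol hEbd hsign hpv hpv'
  have hgp : (eLpNorm g p volume).toReal ≤ N * r ^ p.toReal⁻¹ := by
    have : eLpNorm g p volume ≤ ENNReal.ofReal N * ENNReal.ofReal r ^ p.toReal⁻¹ :=
      hgnorm.trans (by gcongr; exact (eLpNorm_indicator_inv_bFun_le A' hE).trans (by gcongr))
    refine (ENNReal.toReal_mono (by finiteness) this).trans_eq ?_
    rw [ENNReal.toReal_mul, ← ENNReal.toReal_rpow, ENNReal.toReal_ofReal hN,
      ENNReal.toReal_ofReal hr.le]
  have hmax : IntegrableOn (fun x => max (σ * (ψ x - m)) 0) (Ioc a c) :=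
    (((hψ.integrableOn_isCompact isCompact_Icc).mono_set Ioc_subset_Icc_self).sub
      (integrableOn_const measure_Ioc_lt_top.ne)).const_mul σ |>.pos_part
  calc ∫ x in Ioc a c, max (σ * (ψ x - m)) 0
      ≤ 12 * (1 + (L : ℝ) ^ 2) * Real.pi * ∫ x in Ioc a c, ‖g x‖ := by
        rw [← integral_const_mul]
        exact integral_mono_ae hmax (((hg.restrict _).integrable hp1.le).norm.const_mul _) hpt
    _ ≤ 12 * (1 + (L : ℝ) ^ 2) * Real.pi *
          ((eLpNorm g p volume).toReal * volume.real (Ioc a c) ^ (1 - p.toReal⁻¹)) := by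
        gcongr
        exact setIntegral_norm_le_eLpNorm_mul_rpow hp1.le hg measure_Ioc_lt_top.ne
    _ ≤ 12 * (1 + (L : ℝ) ^ 2) * Real.pi * (N * r ^ p.toReal⁻¹ * r ^ (1 - p.toReal⁻¹)) := by
        rw [Real.volume_real_Ioc_of_le hac.le]
        gcongr
    _ = 12 * (1 + (L : ℝ) ^ 2) * Real.pi * (N * r) := by
        rw [mul_assoc N, ← Real.rpow_add hr, add_sub_cancel, Real.rpow_one]

theorem setIntegral_max_le_of_half_measure {A A' : ℝ → ℝ} {L : ℝ≥0} (hA : LipschitzWith L A)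
    (hA'meas : Measurable A') {CΓ : (ℝ → ℂ) → ℝ → ℂ} (hCΓ : IsPVOp (cauchyKer A A') CΓ)
    {p : ℝ≥0∞} (hp1 : 1 < p) (hp2 : p < ⊤) {ψ Ψ : ℝ → ℝ} (hψ : LocallyIntegrable ψ volume)
    (hΨ : Measurable Ψ) (hψΨ : ψ =ᵐ[volume] Ψ) {N : ℝ} (hN : 0 ≤ N)
    (hbdd : BddOnLp p (commutatorFn (fun x => (ψ x : ℂ)) CΓ) N) {a c σ m : ℝ} (hac : a < c)
    (hσ : |σ| ≤ 1) {S : Set ℝ} (hS : MeasurableSet S)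
    (hSJ : S ⊆ Ioc (c + (c - a)) (c + 2 * (c - a))) (hSvol : ENNReal.ofReal (c - a) / 2 ≤ volume S)
    (hSsign : ∀ y ∈ S, σ * (Ψ y - m) ≤ 0) :
    ∫ x in Ioc a c, max (σ * (ψ x - m)) 0 ≤ 12 * (1 + (L : ℝ) ^ 2) * Real.pi * (N * (c - a)) := by
  have hquarter : ENNReal.ofReal ((c - a) / 4) < volume S := by
    refine lt_of_lt_of_le ?_ hSvol
    rw [← ENNReal.ofReal_ofNat 2, ← ENNReal.ofReal_div_of_pos two_pos]
    exact ENNReal.ofReal_lt_ofReal_iff'.2 ⟨by linarith, by linarith⟩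
  obtain ⟨n, hn⟩ := exists_nat_lt_measure_inter_norm_le volume Ψ hquarter
  set E := S ∩ {y | ‖Ψ y‖ ≤ n}
  have hE : MeasurableSet E := hS.inter (hΨ.norm measurableSet_Iic)
  have hEJ : E ⊆ Ioc (c + (c - a)) (c + 2 * (c - a)) := inter_subset_left.trans hSJ
  have hψE : ∀ᵐ y ∂volume.restrict E, y ∈ E ∧ ψ y = Ψ y :=
    (ae_restrict_mem hE).and (ae_restrict_of_ae hψΨ)
  refine setIntegral_max_le_of_commutator_bound hA hA'meas hCΓ hp1 hp2 hψ hN hbdd hac hσ hE hEJ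
    ?_ (n := n) ?_ ?_
  · exact (ENNReal.ofReal_le_iff_le_toReal (measure_ne_top_of_subset hEJ measure_Ioc_lt_top.ne)).1
      hn.le
  · filter_upwards [hψE] with y ⟨hyE, hy⟩
    simpa [hy] using hyE.2
  · filter_upwards [hψE] with y ⟨hyE, hy⟩
    simpa [hy] using hSsign y hyE.1

theorem exists_setIntegral_abs_sub_le_of_commutator_bound {A A' : ℝ → ℝ} {L : ℝ≥0}
    (hA : LipschitzWith L A) (hA'meas : Measurable A') {CΓ : (ℝ → ℂ) → ℝ → ℂ}
    (hCΓ : IsPVOp (cauchyKer A A') CΓ) {p : ℝ≥0∞} (hp1 : 1 < p) (hp2 : p < ⊤) {ψ : ℝ → ℝ}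
    (hψ : LocallyIntegrable ψ volume) {N : ℝ} (hN : 0 ≤ N)
    (hbdd : BddOnLp p (commutatorFn (fun x => (ψ x : ℂ)) CΓ) N) {a c : ℝ} (hac : a < c) :
    ∃ m, ∫ x in Ioc a c, |ψ x - m| ≤ 24 * (1 + (L : ℝ) ^ 2) * Real.pi * (N * (c - a)) := by
  obtain ⟨Ψ, hΨ, hψΨ⟩ := hψ.aestronglyMeasurable.aemeasurable
  set J := Ioc (c + (c - a)) (c + 2 * (c - a))
  have hJ : volume J = ENNReal.ofReal (c - a) := by
    rw [Real.volume_Ioc]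
    ring_nf
  have : IsFiniteMeasure (volume.restrict J) := isFiniteMeasure_restrict.2 measure_Ioc_lt_top.ne
  obtain ⟨m, hlow, hhigh⟩ := ((volume.restrict J).map Ψ).exists_median
  simp only [Measure.map_apply hΨ MeasurableSet.univ, preimage_univ, Measure.restrict_apply_univ,
    Measure.map_apply hΨ measurableSet_Iic, Measure.map_apply hΨ measurableSet_Ici,
    Measure.restrict_apply (hΨ measurableSet_Iic), Measure.restrict_apply (hΨ measurableSet_Ici),
    hJ] at hlow hhigh
  have hbelow := setIntegral_max_le_of_half_measure hA hA'meas hCΓ hp1 hp2 hψ hΨ hψΨ hN hbdd hac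
    (σ := 1) (by norm_num) ((hΨ measurableSet_Iic).inter measurableSet_Ioc) inter_subset_right hlow
    fun y hy => by simpa using hy.1
  have habove := setIntegral_max_le_of_half_measure hA hA'meas hCΓ hp1 hp2 hψ hΨ hψΨ hN hbdd hac
    (σ := -1) (by norm_num) ((hΨ measurableSet_Ici).inter measurableSet_Ioc) inter_subset_right
    hhigh fun y hy => by simpa using hy.1
  have hψI : IntegrableOn (fun x => ψ x - m) (Ioc a c) :=
    ((hψ.integrableOn_isCompact isCompact_Icc).mono_set Ioc_subset_Icc_self).sub
      (integrableOn_const measure_Ioc_lt_top.ne)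
  refine ⟨m, ?_⟩
  simp only [one_mul, neg_one_mul] at hbelow habove
  calc ∫ x in Ioc a c, |ψ x - m|
      = (∫ x in Ioc a c, max (ψ x - m) 0) + ∫ x in Ioc a c, max (-(ψ x - m)) 0 := by
        rw [← integral_add hψI.pos_part hψI.neg_part]
        simp_rw [max_zero_add_max_neg_zero_eq_abs_self]
    _ ≤ 24 * (1 + (L : ℝ) ^ 2) * Real.pi * (N * (c - a)) := by linarith

theorem memBMOb_of_commutator_bound_general
    (A A' : ℝ → ℝ) (L : ℝ≥0) (hA : LipschitzWith L A)
    (hA'meas : Measurable A')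
    (CΓ : (ℝ → ℂ) → ℝ → ℂ)
    (hCΓ : IsPVOp (cauchyKer A A') CΓ)
    (p : ℝ≥0∞) (hp1 : 1 < p) (hp2 : p < ⊤) :
    ∃ C : ℝ, 0 < C ∧ ∀ (𝔄 : ℝ → ℂ) (N : ℝ), 0 ≤ N →
      (∀ x, (𝔄 x / bFun A' x).im = 0) →
      LocallyIntegrable (fun x => 𝔄 x / bFun A' x) volume →
      BddOnLp p (commutatorFn (fun x => 𝔄 x / bFun A' x) CΓ) N →
      MemBMOb (bFun A') 𝔄 ∧ bmobNorm (bFun A') 𝔄 ≤ C * N := by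
  refine ⟨48 * (1 + (L : ℝ) ^ 2) * Real.pi, by positivity, fun 𝔄 N hN him hloc hbdd => ?_⟩
  set ψ : ℝ → ℝ := fun x => (𝔄 x / bFun A' x).re
  have hψ : LocallyIntegrable ψ volume := hloc.mono hloc.aestronglyMeasurable.re
    (ae_of_all _ fun x => by simpa using Complex.abs_re_le_norm (𝔄 x / bFun A' x))
  have hreal : (fun x => 𝔄 x / bFun A' x) = fun x => (ψ x : ℂ) :=
    funext fun x => Complex.ext rfl (by simp [him x])
  rw [hreal] at hloc hbdd
  rw [MemBMOb, bmobNorm, hreal]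
  refine memBMO_and_bmoNorm_le_of_meanOsc_le hloc fun a c hac => ?_
  obtain ⟨m, hm⟩ :=
    exists_setIntegral_abs_sub_le_of_commutator_bound hA hA'meas hCΓ hp1 hp2 hψ hN hbdd hac
  have hr : 0 < c - a := sub_pos.2 hac
  calc meanOsc (fun x => (ψ x : ℂ)) a c
      ≤ 2 * ((c - a)⁻¹ * ∫ x in a..c, ‖(ψ x : ℂ) - m‖) :=
        meanOsc_le_two_mul hac (hloc.integrableOn_isCompact isCompact_uIcc).intervalIntegrable m
    _ = 2 * ((c - a)⁻¹ * ∫ x in Ioc a c, |ψ x - m|) := by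
        simp_rw [intervalIntegral.integral_of_le hac.le, ← Complex.ofReal_sub, Complex.norm_real,
          Real.norm_eq_abs]
    _ ≤ 2 * ((c - a)⁻¹ * (24 * (1 + (L : ℝ) ^ 2) * Real.pi * (N * (c - a)))) := by gcongr
    _ = 48 * (1 + (L : ℝ) ^ 2) * Real.pi * N := by
        field_simp
        ring

/-- **Theorem 1.2 (lower bound).** Let `b = 1 + iA'` and `p ∈ (1, ∞)`. For any complex
function `𝔄` such that `𝔄/b` is real-valued and locally integrable, if the commutator
`[𝔄/b, C_Γ]` is bounded on `L^p(ℝ)` (with constant `N`), then `𝔄 ∈ BMO_b(ℝ)` and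
`‖𝔄‖_{BMO_b} ≤ C N`, with `C` independent of `𝔄`. -/
theorem memBMOb_of_commutator_bound
    (A A' : ℝ → ℝ) (L : ℝ≥0) (hA : LipschitzWith L A)
    (hA' : ∀ᵐ x ∂volume, HasDerivAt A (A' x) x)
    (hA'meas : Measurable A') (hA'bd : ∀ x, |A' x| ≤ (L : ℝ))
    (CΓ : (ℝ → ℂ) → ℝ → ℂ)
    (hCΓ : IsPVOp (cauchyKer A A') CΓ)
    (hCΓbdd : ∀ q : ℝ≥0∞, 1 < q → q < ⊤ → ∃ C : ℝ, BddOnLp q CΓ C)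
    (p : ℝ≥0∞) (hp1 : 1 < p) (hp2 : p < ⊤) :
    ∃ C : ℝ, 0 < C ∧ ∀ (𝔄 : ℝ → ℂ) (N : ℝ), 0 ≤ N →
      (∀ x, (𝔄 x / bFun A' x).im = 0) →
      LocallyIntegrable (fun x => 𝔄 x / bFun A' x) volume →
      BddOnLp p (commutatorFn (fun x => 𝔄 x / bFun A' x) CΓ) N →
      MemBMOb (bFun A') 𝔄 ∧ bmobNorm (bFun A') 𝔄 ≤ C * N :=
  memBMOb_of_commutator_bound_general A A' L hA hA'meas CΓ hCΓ p hp1 hp2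
end

section
/- L^2 bound and support of the bilinear form: for all compactly supported g, h ∈ L^∞(ℝ), the function Π_b(g,h) is supported in supp(g) ∪ supp(h) and belongs to L^2(ℝ), with ‖Π_b(g,h)‖_{L^2(ℝ)} ≤ C (‖g‖_{L^∞(ℝ)} ‖h‖_{L^2(ℝ)} + ‖h‖_{L^∞(ℝ)} ‖g‖_{L^2(ℝ)}), with C independent of g and h. -/
open MeasureTheory Filter Set
open scoped ENNReal Topology NNReal

/-! The bound is Hölder's inequality `‖u • v‖₂ ≤ ‖u‖_∞ ‖v‖₂` applied three times: to
`g • C_Γ h`, to `h • C_Γ* g`, and to the factor `b⁻¹`, which is bounded by `1` since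
`Re b = 1`. The support claim holds pointwise because both terms of `Π_b(g,h)` carry a
factor `g` or `h`. -/

theorem HasCompactSupport.memLp_of_memLp_top {X E : Type*} [TopologicalSpace X]
    [MeasurableSpace X] [NormedAddCommGroup E] {μ : Measure X} [IsFiniteMeasureOnCompacts μ]
    {f : X → E} (hc : HasCompactSupport f) (hf : MemLp f ⊤ μ) (p : ℝ≥0∞) : MemLp f p μ :=
  hf.mono_exponent_of_measure_support_ne_top (fun _ ↦ image_eq_zero_of_notMem_tsupport)
    hc.measure_ne_top le_top

theorem support_piB_subset (b : ℝ → ℂ) (T Tstar : (ℝ → ℂ) → ℝ → ℂ) (g h : ℝ → ℂ) :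
    Function.support (PiB b T Tstar g h) ⊆ Function.support g ∪ Function.support h := by
  intro x hx
  by_contra hgh
  simp only [mem_union, Function.mem_support, not_or, not_not] at hgh
  exact hx (by simp [PiB, hgh.1, hgh.2])

theorem piB_eq_smul (b : ℝ → ℂ) (T Tstar : (ℝ → ℂ) → ℝ → ℂ) (g h : ℝ → ℂ) :
    PiB b T Tstar g h = (fun x ↦ (b x)⁻¹) • (g • T h - h • Tstar g) :=
  rfl

section BddOnLp

variable {p : ℝ≥0∞} {T : (ℝ → ℂ) → ℝ → ℂ} {C : ℝ} {f u : ℝ → ℂ}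

theorem BddOnLp.memLp_smul (hT : BddOnLp p T C) (hf : MemLp f p volume)
    (hu : MemLp u ⊤ volume) : MemLp (u • T f) p volume :=
  (hT f hf).1.smul hu

theorem BddOnLp.eLpNorm_smul_le (hT : BddOnLp p T C) (hf : MemLp f p volume) (u : ℝ → ℂ) :
    eLpNorm (u • T f) p volume ≤
      ENNReal.ofReal C * (eLpNorm u ⊤ volume * eLpNorm f p volume) :=
  calc eLpNorm (u • T f) p volume ≤ eLpNorm u ⊤ volume * eLpNorm (T f) p volume :=
        eLpNorm_smul_le_eLpNorm_top_mul_eLpNorm p (hT f hf).1.1 u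
    _ ≤ eLpNorm u ⊤ volume * (ENNReal.ofReal C * eLpNorm f p volume) := by
        gcongr; exact (hT f hf).2
    _ = ENNReal.ofReal C * (eLpNorm u ⊤ volume * eLpNorm f p volume) := by ring

end BddOnLp

section PiB

variable {p : ℝ≥0∞} {b : ℝ → ℂ} {T Tstar : (ℝ → ℂ) → ℝ → ℂ} {C₁ C₂ : ℝ} {g h : ℝ → ℂ}

theorem memLp_piB (hb : MemLp (fun x ↦ (b x)⁻¹) ⊤ volume) (hT : BddOnLp p T C₁)
    (hTstar : BddOnLp p Tstar C₂) (hg : MemLp g p volume) (hh : MemLp h p volume)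
    (hg' : MemLp g ⊤ volume) (hh' : MemLp h ⊤ volume) :
    MemLp (PiB b T Tstar g h) p volume := by
  rw [piB_eq_smul]
  exact ((hT.memLp_smul hh hg').sub (hTstar.memLp_smul hg hh')).smul hb

theorem eLpNorm_piB_le (hp : 1 ≤ p) (hT : BddOnLp p T C₁) (hTstar : BddOnLp p Tstar C₂)
    (hg : MemLp g p volume) (hh : MemLp h p volume) (hg' : MemLp g ⊤ volume)
    (hh' : MemLp h ⊤ volume) :
    eLpNorm (PiB b T Tstar g h) p volume ≤ eLpNorm (fun x ↦ (b x)⁻¹) ⊤ volume *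
      (ENNReal.ofReal C₁ * (eLpNorm g ⊤ volume * eLpNorm h p volume) +
        ENNReal.ofReal C₂ * (eLpNorm h ⊤ volume * eLpNorm g p volume)) := by
  have hgTh := hT.memLp_smul hh hg'
  have hhTg := hTstar.memLp_smul hg hh'
  rw [piB_eq_smul]
  calc _ ≤ eLpNorm (fun x ↦ (b x)⁻¹) ⊤ volume * eLpNorm (g • T h - h • Tstar g) p volume :=
        eLpNorm_smul_le_eLpNorm_top_mul_eLpNorm p (hgTh.sub hhTg).1 _
    _ ≤ eLpNorm (fun x ↦ (b x)⁻¹) ⊤ volume *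
          (eLpNorm (g • T h) p volume + eLpNorm (h • Tstar g) p volume) := by
        gcongr; exact eLpNorm_sub_le hgTh.1 hhTg.1 hp
    _ ≤ _ := by
        gcongr
        exacts [hT.eLpNorm_smul_le hh g, hTstar.eLpNorm_smul_le hg h]

end PiB

theorem norm_bFun_inv_le_one (A' : ℝ → ℝ) (x : ℝ) : ‖(bFun A' x)⁻¹‖ ≤ 1 := by
  have hre : (bFun A' x).re = 1 := by simp [bFun]
  rw [norm_inv]
  exact inv_le_one_of_one_le₀ (by simpa [hre] using Complex.abs_re_le_norm (bFun A' x))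

theorem memLp_top_bFun_inv {A' : ℝ → ℝ} (hA' : Measurable A') :
    MemLp (fun x ↦ (bFun A' x)⁻¹) ⊤ volume := by
  refine memLp_top_of_bound (Measurable.aestronglyMeasurable ?_) 1
    (.of_forall (norm_bFun_inv_le_one A'))
  unfold bFun
  fun_prop

theorem eLpNorm_top_bFun_inv_le_one (A' : ℝ → ℝ) :
    eLpNorm (fun x ↦ (bFun A' x)⁻¹) ⊤ volume ≤ 1 := by
  rw [eLpNorm_exponent_top]
  simpa using eLpNormEssSup_le_of_ae_bound (μ := volume) (.of_forall (norm_bFun_inv_le_one A'))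

theorem piB_L2_bound_and_support_general
    (A' : ℝ → ℝ)
    (hA'meas : Measurable A')
    (CΓ CΓstar : (ℝ → ℂ) → ℝ → ℂ)
    (hCΓ2 : ∃ C : ℝ, BddOnLp 2 CΓ C)
    (hCΓs2 : ∃ C : ℝ, BddOnLp 2 CΓstar C) :
    ∃ C : ℝ, 0 < C ∧ ∀ g h : ℝ → ℂ,
      HasCompactSupport g → HasCompactSupport h →
      MemLp g ⊤ volume → MemLp h ⊤ volume →
      Function.support (PiB (bFun A') CΓ CΓstar g h) ⊆
        Function.support g ∪ Function.support h ∧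
      MemLp (PiB (bFun A') CΓ CΓstar g h) 2 volume ∧
      eLpNorm (PiB (bFun A') CΓ CΓstar g h) 2 volume ≤
        ENNReal.ofReal C *
          (eLpNorm g ⊤ volume * eLpNorm h 2 volume +
            eLpNorm h ⊤ volume * eLpNorm g 2 volume) := by
  obtain ⟨C₁, hC₁⟩ := hCΓ2
  obtain ⟨C₂, hC₂⟩ := hCΓs2
  set C := max (max C₁ C₂) 1
  refine ⟨C, one_pos.trans_le (le_max_right _ _), fun g h hgc hhc hg hh ↦ ?_⟩
  have hg2 := hgc.memLp_of_memLp_top hg 2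
  have hh2 := hhc.memLp_of_memLp_top hh 2
  refine ⟨support_piB_subset _ _ _ g h,
    memLp_piB (memLp_top_bFun_inv hA'meas) hC₁ hC₂ hg2 hh2 hg hh, ?_⟩
  have hC₁C : ENNReal.ofReal C₁ ≤ ENNReal.ofReal C := by
    gcongr; exact le_max_of_le_left (le_max_left _ _)
  have hC₂C : ENNReal.ofReal C₂ ≤ ENNReal.ofReal C := by
    gcongr; exact le_max_of_le_left (le_max_right _ _)
  calc _ ≤ 1 * (ENNReal.ofReal C₁ * (eLpNorm g ⊤ volume * eLpNorm h 2 volume) +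
          ENNReal.ofReal C₂ * (eLpNorm h ⊤ volume * eLpNorm g 2 volume)) :=
        (eLpNorm_piB_le one_le_two hC₁ hC₂ hg2 hh2 hg hh).trans
          (by gcongr; exact eLpNorm_top_bFun_inv_le_one A')
    _ ≤ _ := by rw [one_mul, mul_add]; gcongr

/-- **`L²` bound and support of the bilinear form `Π_b`** : for compactly supported
`g, h ∈ L^∞(ℝ)`, `Π_b(g,h)` is supported in `supp g ∪ supp h`, belongs to `L²(ℝ)`, and
`‖Π_b(g,h)‖₂ ≤ C (‖g‖_∞ ‖h‖₂ + ‖h‖_∞ ‖g‖₂)` with `C` independent of `g, h`. -/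
theorem piB_L2_bound_and_support
    (A A' : ℝ → ℝ) (L : ℝ≥0) (hA : LipschitzWith L A)
    (hA' : ∀ᵐ x ∂volume, HasDerivAt A (A' x) x)
    (hA'meas : Measurable A') (hA'bd : ∀ x, |A' x| ≤ (L : ℝ))
    (CΓ CΓstar : (ℝ → ℂ) → ℝ → ℂ)
    (hCΓ : IsPVOp (cauchyKer A A') CΓ)
    (hCΓ2 : ∃ C : ℝ, BddOnLp 2 CΓ C)
    (hadj : IsBilinAdjoint CΓ CΓstar)
    (hCΓs2 : ∃ C : ℝ, BddOnLp 2 CΓstar C) :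
    ∃ C : ℝ, 0 < C ∧ ∀ g h : ℝ → ℂ,
      HasCompactSupport g → HasCompactSupport h →
      MemLp g ⊤ volume → MemLp h ⊤ volume →
      Function.support (PiB (bFun A') CΓ CΓstar g h) ⊆
        Function.support g ∪ Function.support h ∧
      MemLp (PiB (bFun A') CΓ CΓstar g h) 2 volume ∧
      eLpNorm (PiB (bFun A') CΓ CΓstar g h) 2 volume ≤
        ENNReal.ofReal C *
          (eLpNorm g ⊤ volume * eLpNorm h 2 volume +
            eLpNorm h ⊤ volume * eLpNorm g 2 volume) :=
  piB_L2_bound_and_support_general A' hA'meas CΓ CΓstar hCΓ2 hCΓs2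
end

section
/- Non-degeneracy of the Cauchy integral of a far-away bump: let A : ℝ → ℝ be Lipschitz with Lipschitz constant L = ‖A'‖_∞. Let r > 0, M ≥ 100, and x0, y0 ∈ ℝ with y0 − x0 = Mr. Then | (1/(πi)) ∫_{I(y0,r)} dy / (y − x0 + i(A(y) − A(x0))) | ≥ c / M, where c > 0 depends only on L. (No principal value is needed since x0 ∉ I(y0,r).) -/
open MeasureTheory Filter Set
open scoped ENNReal Topology NNReal

/-! For `y` in the ball, `y - x0 ≈ M r > 0` and the Lipschitz bound keeps the chord
`y - x0 + i (A y - A x0)` in the cone `|Im| ≤ L Re`, so `Re (1 / chord) ≥ 1 / ((1 + L²)(y - x0))`.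
Integrating this positive lower bound over the ball (length `2r`, with `y - x0 ≤ 2 M r`) bounds the
real part of the integral, and hence its modulus, from below by `1 / ((1 + L²) M)`. -/

theorem Complex.inv_one_add_sq_mul_re_le_re_inv {z : ℂ} {L : ℝ} (hre : 0 < z.re)
    (him : |z.im| ≤ L * z.re) : ((1 + L ^ 2) * z.re)⁻¹ ≤ (z⁻¹).re := by
  have hnormSq : Complex.normSq z ≤ (1 + L ^ 2) * z.re ^ 2 := by
    rw [Complex.normSq_apply]
    nlinarith [sq_abs z.im, abs_nonneg z.im]
  have hpos : 0 < Complex.normSq z := by rw [Complex.normSq_apply]; nlinarith [mul_self_nonneg z.im]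
  rw [Complex.inv_re, le_div_iff₀ hpos, ← div_eq_inv_mul, div_le_iff₀ (by positivity)]
  nlinarith

theorem Complex.mul_measureReal_le_re_setIntegral {X : Type*} [MeasurableSpace X]
    {μ : Measure X} {s : Set X} {f : X → ℂ} {c : ℝ} (hs : MeasurableSet s) (hμs : μ s ≠ ∞)
    (hf : IntegrableOn f s μ) (hc : ∀ x ∈ s, c ≤ (f x).re) :
    c * μ.real s ≤ (∫ x in s, f x ∂μ).re :=
  (setIntegral_ge_of_const_le_real hs hμs hc hf.re).trans_eq (integral_re hf)

section Chord

variable {A : ℝ → ℝ} {L : ℝ≥0}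

theorem LipschitzWith.inv_le_re_one_div_chord (hA : LipschitzWith L A) {x y : ℝ} (hxy : x < y) :
    ((1 + (L : ℝ) ^ 2) * (y - x))⁻¹ ≤
      (1 / ((y : ℂ) - x + Complex.I * ((A y : ℂ) - A x))).re := by
  have him : |A y - A x| ≤ L * (y - x) := by
    simpa [Real.dist_eq, abs_of_pos (sub_pos.2 hxy)] using hA.dist_le_mul y x
  rw [one_div]
  convert Complex.inv_one_add_sq_mul_re_le_re_inv (z := (y : ℂ) - x + Complex.I * ((A y : ℂ) - A x))
    (L := L) ?_ ?_ using 3 <;> simp [sub_pos.2 hxy, him]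

theorem LipschitzWith.continuousOn_one_div_chord (hA : LipschitzWith L A) (x : ℝ) :
    ContinuousOn (fun y : ℝ => 1 / ((y : ℂ) - x + Complex.I * ((A y : ℂ) - A x))) {x}ᶜ := by
  have := hA.continuous
  refine continuousOn_const.div (by fun_prop) fun y hy h0 => hy ?_
  simpa [sub_eq_zero] using congrArg Complex.re h0

end Chord

/-- **Non-degeneracy of the Cauchy integral of a far-away bump** (estimate (4.3)): if `A`
is Lipschitz with constant `L`, `r > 0`, `M ≥ 100` and `y0 − x0 = M r`, then
`|(1/(πi)) ∫_{I(y0,r)} dy / (y − x0 + i(A(y) − A(x0)))| ≥ c / M`, where `c > 0` depends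
only on `L`. (No principal value is needed since `x0 ∉ I(y0,r)`.) -/
theorem cauchy_bump_nondegenerate (L : ℝ≥0) :
    ∃ c : ℝ, 0 < c ∧ ∀ A : ℝ → ℝ, LipschitzWith L A →
      ∀ x0 y0 r M : ℝ, 0 < r → 100 ≤ M → y0 - x0 = M * r →
        c / M ≤ ‖((Real.pi : ℂ) * Complex.I)⁻¹ *
          ∫ y in Metric.ball y0 r,
            1 / ((y : ℂ) - (x0 : ℂ) + Complex.I * ((A y : ℂ) - (A x0 : ℂ)))‖ := by
  refine ⟨1 / (Real.pi * (1 + (L : ℝ) ^ 2)), by positivity, ?_⟩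
  intro A hA x0 y0 r M hr hM hyx
  have hball : ∀ y ∈ Metric.closedBall y0 r, x0 < y ∧ y - x0 ≤ 2 * M * r := by
    intro y hy
    rw [Metric.mem_closedBall, Real.dist_eq, abs_le] at hy
    constructor <;> nlinarith
  have hint : IntegrableOn
      (fun y : ℝ => 1 / ((y : ℂ) - x0 + Complex.I * ((A y : ℂ) - A x0))) (Metric.ball y0 r) :=
    (((hA.continuousOn_one_div_chord x0).mono fun y hy => (hball y hy).1.ne').integrableOn_compact
      (isCompact_closedBall y0 r)).mono_set Metric.ball_subset_closedBall
  have hbound : ∀ y ∈ Metric.ball y0 r, ((1 + (L : ℝ) ^ 2) * (2 * M * r))⁻¹ ≤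
      (1 / ((y : ℂ) - x0 + Complex.I * ((A y : ℂ) - A x0))).re := by
    intro y hy
    obtain ⟨hxy, hyM⟩ := hball y (Metric.ball_subset_closedBall hy)
    refine le_trans ?_ (hA.inv_le_re_one_div_chord hxy)
    gcongr
  have hintegral := Complex.mul_measureReal_le_re_setIntegral measurableSet_ball
    measure_ball_lt_top.ne hint hbound
  rw [Real.volume_real_ball hr.le] at hintegral
  have hnorm : ‖((Real.pi : ℂ) * Complex.I)⁻¹‖ = Real.pi⁻¹ := by
    simp [Real.pi_pos.le]
  rw [norm_mul, hnorm]
  calc 1 / (Real.pi * (1 + (L : ℝ) ^ 2)) / M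
      = Real.pi⁻¹ * (((1 + (L : ℝ) ^ 2) * (2 * M * r))⁻¹ * (2 * r)) := by
        field_simp
    _ ≤ _ := by gcongr; exact hintegral.trans (Complex.re_le_norm _)
end
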